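/- Let λ ∈ E be such that λ+ρ is regular, and let α, β ∈ Φ⁺ be orthogonal positive roots ((α,β) = 0) satisfying ⟨λ+ρ, α∨⟩ = ⟨λ+ρ, β∨⟩. Then |l(λ) − l((s_α s_β) * λ)| ≥ 2. -/

import Mathlib

open scoped RealInnerProductSpace

/-- The reflection `s_α(x) = x - ⟨x, α∨⟩ α` attached to a root `α`, where
`⟨x, α∨⟩ = 2(x,α)/(α,α)`. -/
noncomputable def sRefl {E : Type*} [NormedAddCommGroup E] [InnerProductSpace ℝ E]
    (α x : E) : E :=
  x - (2 * ⟪x, α⟫ / ⟪α, α⟫) • α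

section Helpers

variable {E : Type*} [NormedAddCommGroup E] [InnerProductSpace ℝ E]

lemma inner_sRefl_left (δ x y : E) :
    ⟪sRefl δ x, y⟫ = ⟪x, y⟫ - 2 * ⟪x, δ⟫ / ⟪δ, δ⟫ * ⟪δ, y⟫ := by
  simp [sRefl, inner_sub_left, real_inner_smul_left]

lemma inner_sRefl_symm (δ x y : E) : ⟪sRefl δ x, y⟫ = ⟪x, sRefl δ y⟫ := by
  simp only [sRefl, inner_sub_left, inner_sub_right, real_inner_smul_left,
    real_inner_smul_right]
  rw [real_inner_comm y δ, real_inner_comm δ y]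
  ring

lemma sRefl_inner_self {δ : E} (hδ : ⟪δ, δ⟫ ≠ 0) (x : E) :
    ⟪sRefl δ x, δ⟫ = -⟪x, δ⟫ := by
  rw [inner_sRefl_left]
  field_simp
  ring

lemma sRefl_sRefl {δ : E} (hδ : ⟪δ, δ⟫ ≠ 0) (x : E) : sRefl δ (sRefl δ x) = x := by
  have h1 : ⟪sRefl δ x, δ⟫ = -⟪x, δ⟫ := sRefl_inner_self hδ x
  conv_lhs => rw [sRefl, h1]
  have h2 : 2 * -⟪x, δ⟫ / ⟪δ, δ⟫ = -(2 * ⟪x, δ⟫ / ⟪δ, δ⟫) := by ring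
  rw [h2, neg_smul, sub_neg_eq_add, sRefl]
  abel

lemma sRefl_of_inner_eq_zero {δ x : E} (h : ⟪x, δ⟫ = 0) : sRefl δ x = x := by
  simp [sRefl, h]

lemma sRefl_self {δ : E} (hδ : ⟪δ, δ⟫ ≠ 0) : sRefl δ δ = -δ := by
  rw [sRefl]
  have : 2 * ⟪δ, δ⟫ / ⟪δ, δ⟫ = 2 := by field_simp
  rw [this]
  module

lemma sRefl_neg (δ x : E) : sRefl δ (-x) = -sRefl δ x := by
  simp only [sRefl, inner_neg_left]
  have : 2 * -⟪x, δ⟫ / ⟪δ, δ⟫ = -(2 * ⟪x, δ⟫ / ⟪δ, δ⟫) := by ring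
  rw [this]
  module

lemma sRefl_comm {α β : E} (h : ⟪α, β⟫ = 0) (x : E) :
    sRefl α (sRefl β x) = sRefl β (sRefl α x) := by
  have hβα : ⟪β, α⟫ = 0 := by rw [real_inner_comm]; exact h
  simp only [sRefl, inner_sub_left, real_inner_smul_left, h, hβα, mul_zero, sub_zero,
    zero_mul]
  abel

/-- If two non-opposite roots have negative inner product, their sum is a root. -/
lemma add_mem_of_inner_neg {E : Type*} [NormedAddCommGroup E] [InnerProductSpace ℝ E]
    (Φ : Finset E)
    (hΦ0 : (0 : E) ∉ Φ)
    (hΦrefl : ∀ α ∈ Φ, ∀ β ∈ Φ, sRefl α β ∈ Φ)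
    (hΦint : ∀ α ∈ Φ, ∀ β ∈ Φ, ∃ n : ℤ, 2 * ⟪β, α⟫ / ⟪α, α⟫ = (n : ℝ))
    {x y : E} (hx : x ∈ Φ) (hy : y ∈ Φ) (hxy : ⟪x, y⟫ < 0) (hne : x ≠ -y) :
    x + y ∈ Φ := by
  have hx0 : x ≠ 0 := fun h => hΦ0 (h ▸ hx)
  have hy0 : y ≠ 0 := fun h => hΦ0 (h ▸ hy)
  have hxx : 0 < ⟪x, x⟫ :=
    lt_of_le_of_ne real_inner_self_nonneg (Ne.symm ((inner_self_ne_zero (𝕜 := ℝ)).mpr hx0))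
  have hyy : 0 < ⟪y, y⟫ :=
    lt_of_le_of_ne real_inner_self_nonneg (Ne.symm ((inner_self_ne_zero (𝕜 := ℝ)).mpr hy0))
  have hyx : ⟪y, x⟫ = ⟪x, y⟫ := real_inner_comm x y
  obtain ⟨n₁, hn₁⟩ := hΦint y hy x hx
  obtain ⟨n₂, hn₂⟩ := hΦint x hx y hy
  rw [hyx] at hn₂
  have hn₁neg : n₁ < 0 := by
    have h : (n₁ : ℝ) < 0 := by
      rw [← hn₁]; exact div_neg_of_neg_of_pos (by linarith) hyy
    exact_mod_cast h
  have hn₂neg : n₂ < 0 := by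
    have h : (n₂ : ℝ) < 0 := by
      rw [← hn₂]; exact div_neg_of_neg_of_pos (by linarith) hxx
    exact_mod_cast h
  have hprod : (n₁ : ℝ) * n₂ ≤ 4 := by
    rw [← hn₁, ← hn₂, div_mul_div_comm]
    rw [div_le_iff₀ (by positivity)]
    nlinarith [real_inner_mul_inner_self_le x y]
  have hkey : n₁ = -1 ∨ n₂ = -1 := by
    by_contra hcon
    push_neg at hcon
    have h₁ : n₁ ≤ -2 := by omega
    have h₂ : n₂ ≤ -2 := by omega
    have h4 : (4 : ℤ) ≤ n₁ * n₂ := by nlinarith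
    have hle : n₁ * n₂ ≤ 4 := by exact_mod_cast hprod
    have hn₁2 : n₁ = -2 := by nlinarith
    have hn₂2 : n₂ = -2 := by nlinarith
    rw [hn₁2] at hn₁; rw [hn₂2] at hn₂
    have e₁ : ⟪x, y⟫ = -⟪y, y⟫ := by
      have := hn₁; push_cast at this; field_simp at this; linarith
    have e₂ : ⟪x, y⟫ = -⟪x, x⟫ := by
      have := hn₂; push_cast at this; field_simp at this; linarith
    have hz : ⟪x + y, x + y⟫ = 0 := by
      rw [inner_add_add_self, hyx]; linarith
    have h0 : x + y = 0 := (inner_self_eq_zero (𝕜 := ℝ)).mp hz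
    exact hne (eq_neg_of_add_eq_zero_left h0)
  rcases hkey with h | h
  · have hcoef : 2 * ⟪x, y⟫ / ⟪y, y⟫ = -1 := by rw [hn₁, h]; norm_num
    have hexp : sRefl y x = x + y := by
      rw [sRefl, hcoef]; module
    have := hΦrefl y hy x hx
    rwa [hexp] at this
  · have hcoef : 2 * ⟪x, y⟫ / ⟪x, x⟫ = -1 := by rw [hn₂, h]; norm_num
    have hexp : sRefl x y = x + y := by
      rw [sRefl, real_inner_comm x y, hcoef]; module
    have := hΦrefl x hx y hy
    rwa [hexp] at this


/-- If `γ` is a positive root whose reflection by the positive root `δ` is not positive,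
then `(γ,δ) ≥ 0`. -/
lemma inner_nonneg_of_sRefl_not_pos {E : Type*} [NormedAddCommGroup E] [InnerProductSpace ℝ E]
    (Φ Φpos : Finset E)
    (hΦ0 : (0 : E) ∉ Φ)
    (hΦrefl : ∀ α ∈ Φ, ∀ β ∈ Φ, sRefl α β ∈ Φ)
    (hΦred : ∀ α ∈ Φ, ∀ t : ℝ, t • α ∈ Φ → t = 1 ∨ t = -1)
    (hΦint : ∀ α ∈ Φ, ∀ β ∈ Φ, ∃ n : ℤ, 2 * ⟪β, α⟫ / ⟪α, α⟫ = (n : ℝ))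
    (hposΦ : Φpos ⊆ Φ)
    (hpos : ∀ α ∈ Φ, (α ∈ Φpos ↔ -α ∉ Φpos))
    (hposadd : ∀ α ∈ Φpos, ∀ β ∈ Φpos, α + β ∈ Φ → α + β ∈ Φpos)
    {δ γ : E} (hδ : δ ∈ Φpos) (hγ : γ ∈ Φpos) (hs : sRefl δ γ ∉ Φpos) :
    0 ≤ ⟪γ, δ⟫ := by
  by_contra hcon
  push_neg at hcon
  have hδΦ := hposΦ hδ
  have hγΦ := hposΦ hγ
  have hδ0 : δ ≠ 0 := fun h => hΦ0 (h ▸ hδΦ)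
  have hγ0 : γ ≠ 0 := fun h => hΦ0 (h ▸ hγΦ)
  have hδδ : 0 < ⟪δ, δ⟫ :=
    lt_of_le_of_ne real_inner_self_nonneg (Ne.symm ((inner_self_ne_zero (𝕜 := ℝ)).mpr hδ0))
  have hγγ : 0 < ⟪γ, γ⟫ :=
    lt_of_le_of_ne real_inner_self_nonneg (Ne.symm ((inner_self_ne_zero (𝕜 := ℝ)).mpr hγ0))
  have hγnδ : γ ≠ -δ := by
    intro h
    exact ((hpos δ hδΦ).mp hδ) (h ▸ hγ)
  obtain ⟨n₁, hn₁⟩ := hΦint δ hδΦ γ hγΦ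
  obtain ⟨n₂, hn₂⟩ := hΦint γ hγΦ δ hδΦ
  rw [real_inner_comm γ δ] at hn₂
  have hn₁neg : n₁ < 0 := by
    have h : (n₁ : ℝ) < 0 := by
      rw [← hn₁]; exact div_neg_of_neg_of_pos (by linarith) hδδ
    exact_mod_cast h
  have hn₂neg : n₂ < 0 := by
    have h : (n₂ : ℝ) < 0 := by
      rw [← hn₂]; exact div_neg_of_neg_of_pos (by linarith) hγγ
    exact_mod_cast h
  have hprod : (n₁ : ℝ) * n₂ ≤ 4 := by
    rw [← hn₁, ← hn₂, div_mul_div_comm]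
    rw [div_le_iff₀ (by positivity)]
    nlinarith [real_inner_mul_inner_self_le γ δ]
  have hprodZ : n₁ * n₂ ≤ 4 := by exact_mod_cast hprod
  -- `n₁ ≥ -3`
  have hn₁ge : -3 ≤ n₁ := by
    by_contra hc
    push_neg at hc
    have h₁ : n₁ ≤ -4 := by omega
    have h4 : (4 : ℤ) ≤ n₁ * n₂ := by nlinarith
    have hn₁4 : n₁ = -4 := by nlinarith
    have hn₂1 : n₂ = -1 := by
      rw [hn₁4] at hprodZ h4; omega
    rw [hn₁4] at hn₁; rw [hn₂1] at hn₂
    push_cast at hn₁ hn₂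
    have e₁ : ⟪γ, δ⟫ = -2 * ⟪δ, δ⟫ := by field_simp at hn₁; linarith
    have e₂ : 2 * ⟪γ, δ⟫ = -⟪γ, γ⟫ := by field_simp at hn₂; linarith
    have hz : ⟪γ + (2 : ℝ) • δ, γ + (2 : ℝ) • δ⟫ = 0 := by
      rw [inner_add_add_self, real_inner_smul_left, real_inner_smul_right,
        real_inner_smul_left, real_inner_smul_right, real_inner_comm γ δ]
      linarith
    have h0 : γ + (2 : ℝ) • δ = 0 := (inner_self_eq_zero (𝕜 := ℝ)).mp hz
    have hγ2δ : γ = (-2 : ℝ) • δ := by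
      have := eq_neg_of_add_eq_zero_left h0
      rw [this]; module
    have : ((-2 : ℝ)) • δ ∈ Φ := hγ2δ ▸ hγΦ
    rcases hΦred δ hδΦ (-2) this with h | h <;> norm_num at h
  have hsγΦ : sRefl δ γ ∈ Φ := hΦrefl δ hδΦ γ hγΦ
  interval_cases n₁
  · -- n₁ = -3
    push_cast at hn₁
    have hγδval : 2 * ⟪γ, δ⟫ = -3 * ⟪δ, δ⟫ := by field_simp at hn₁; linarith
    have h1 : γ + δ ∈ Φ := add_mem_of_inner_neg Φ hΦ0 hΦrefl hΦint hγΦ hδΦ hcon hγnδ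
    have h1p : γ + δ ∈ Φpos := hposadd γ hγ δ hδ h1
    have hneg2 : ⟪γ + δ, δ⟫ < 0 := by
      rw [inner_add_left]; nlinarith
    have hne2 : γ + δ ≠ -δ := by
      intro h
      have hγ2δ : γ = (-2 : ℝ) • δ := by
        have : γ = -δ - δ := by rw [← h]; abel
        rw [this]; module
      have : ((-2 : ℝ)) • δ ∈ Φ := hγ2δ ▸ hγΦ
      rcases hΦred δ hδΦ (-2) this with h' | h' <;> norm_num at h'
    have h2 : (γ + δ) + δ ∈ Φ :=
      add_mem_of_inner_neg Φ hΦ0 hΦrefl hΦint (hposΦ h1p) hδΦ hneg2 hne2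
    have h2p : (γ + δ) + δ ∈ Φpos := hposadd _ h1p δ hδ h2
    have hexp : sRefl δ γ = ((γ + δ) + δ) + δ := by
      rw [sRefl, hn₁]; module
    have h3 : ((γ + δ) + δ) + δ ∈ Φ := hexp ▸ hsγΦ
    exact hs (hexp ▸ hposadd _ h2p δ hδ h3)
  · -- n₁ = -2
    push_cast at hn₁
    have h1 : γ + δ ∈ Φ := add_mem_of_inner_neg Φ hΦ0 hΦrefl hΦint hγΦ hδΦ hcon hγnδ
    have h1p : γ + δ ∈ Φpos := hposadd γ hγ δ hδ h1
    have hexp : sRefl δ γ = (γ + δ) + δ := by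
      rw [sRefl, hn₁]; module
    have h2 : (γ + δ) + δ ∈ Φ := hexp ▸ hsγΦ
    exact hs (hexp ▸ hposadd _ h1p δ hδ h2)
  · -- n₁ = -1
    push_cast at hn₁
    have hexp : sRefl δ γ = γ + δ := by
      rw [sRefl, hn₁]; module
    have h1 : γ + δ ∈ Φ := hexp ▸ hsγΦ
    exact hs (hexp ▸ hposadd γ hγ δ hδ h1)

/-- The key counting step: one reflection in a positive root `δ` with `(ν,δ) > 0`
increases the number of inversions by at least one. -/
lemma step_card {E : Type*} [NormedAddCommGroup E] [InnerProductSpace ℝ E]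
    (Φ Φpos : Finset E)
    (hΦ0 : (0 : E) ∉ Φ)
    (hΦrefl : ∀ α ∈ Φ, ∀ β ∈ Φ, sRefl α β ∈ Φ)
    (hΦred : ∀ α ∈ Φ, ∀ t : ℝ, t • α ∈ Φ → t = 1 ∨ t = -1)
    (hΦint : ∀ α ∈ Φ, ∀ β ∈ Φ, ∃ n : ℤ, 2 * ⟪β, α⟫ / ⟪α, α⟫ = (n : ℝ))
    (hposΦ : Φpos ⊆ Φ)
    (hpos : ∀ α ∈ Φ, (α ∈ Φpos ↔ -α ∉ Φpos))
    (hposadd : ∀ α ∈ Φpos, ∀ β ∈ Φpos, α + β ∈ Φ → α + β ∈ Φpos)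
    (ν δ : E) (hδ : δ ∈ Φpos) (hνδ : 0 < ⟪ν, δ⟫) :
    (Φpos.filter fun γ => ⟪ν, γ⟫ < 0).card + 1
      ≤ (Φpos.filter fun γ => ⟪sRefl δ ν, γ⟫ < 0).card := by
  classical
  have hδΦ := hposΦ hδ
  have hδ0 : δ ≠ 0 := fun h => hΦ0 (h ▸ hδΦ)
  have hδδ : 0 < ⟪δ, δ⟫ :=
    lt_of_le_of_ne real_inner_self_nonneg (Ne.symm ((inner_self_ne_zero (𝕜 := ℝ)).mpr hδ0))
  have hδδ' : ⟪δ, δ⟫ ≠ 0 := ne_of_gt hδδ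
  have hss : ∀ x : E, sRefl δ (sRefl δ x) = x := sRefl_sRefl hδδ'
  have hsym : ∀ x : E, ⟪sRefl δ ν, x⟫ = ⟪ν, sRefl δ x⟫ := inner_sRefl_symm δ ν
  have hsmem : ∀ γ ∈ Φpos, sRefl δ γ ∈ Φ := fun γ hγ => hΦrefl δ hδΦ γ (hposΦ hγ)
  have hnegmem : ∀ γ ∈ Φpos, sRefl δ γ ∉ Φpos → -sRefl δ γ ∈ Φpos := by
    intro γ hγ h
    by_contra h2
    exact h ((hpos (sRefl δ γ) (hsmem γ hγ)).mpr h2)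
  have hsδ : sRefl δ δ = -δ := sRefl_self hδδ'
  simp only [hsym]
  set A : Finset E := Φpos.filter fun γ => ⟪ν, γ⟫ < 0 with hAdef
  set B : Finset E := Φpos.filter fun γ => ⟪ν, sRefl δ γ⟫ < 0 with hBdef
  set T : Finset E := Φpos.filter fun γ => sRefl δ γ ∉ Φpos ∧ 0 < ⟪ν, γ⟫ with hTdef
  have hApart := Finset.card_filter_add_card_filter_not
    (s := A) (fun γ => sRefl δ γ ∈ Φpos)
  have hBpart := Finset.card_filter_add_card_filter_not
    (s := B) (fun γ => sRefl δ γ ∈ Φpos)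
  -- (i) the "permuted" parts have the same cardinality
  have hi : (B.filter fun γ => sRefl δ γ ∈ Φpos).card
      = (A.filter fun γ => sRefl δ γ ∈ Φpos).card := by
    apply Finset.card_nbij' (fun γ => sRefl δ γ) (fun γ => sRefl δ γ)
    · intro a ha
      simp only [hAdef, hBdef, Finset.mem_filter, Finset.mem_coe] at ha ⊢
      refine ⟨⟨ha.2, ha.1.2⟩, ?_⟩
      rw [hss]; exact ha.1.1
    · intro a ha
      simp only [hAdef, hBdef, Finset.mem_filter, Finset.mem_coe] at ha ⊢
      refine ⟨⟨ha.2, ?_⟩, ?_⟩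
      · rw [hss]; exact ha.1.2
      · rw [hss]; exact ha.1.1
    · intro a _; exact hss a
    · intro a _; exact hss a
  -- (ii) the part of `B` with `sγ` negative is in bijection with `T`
  have hii : (B.filter fun γ => ¬ sRefl δ γ ∈ Φpos).card = T.card := by
    apply Finset.card_nbij' (fun γ => -sRefl δ γ) (fun γ => -sRefl δ γ)
    · intro a ha
      simp only [hBdef, hTdef, Finset.mem_filter, Finset.mem_coe] at ha ⊢
      obtain ⟨⟨ha1, ha2⟩, ha3⟩ := ha
      refine ⟨hnegmem a ha1 ha3, ?_, ?_⟩
      · rw [sRefl_neg, hss]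
        exact fun hc => ((hpos a (hposΦ ha1)).mp ha1) hc
      · rw [inner_neg_right]; linarith
    · intro a ha
      simp only [hBdef, hTdef, Finset.mem_filter, Finset.mem_coe] at ha ⊢
      obtain ⟨ha1, ha2, ha3⟩ := ha
      refine ⟨⟨hnegmem a ha1 ha2, ?_⟩, ?_⟩
      · rw [sRefl_neg, hss, inner_neg_right]; linarith
      · rw [sRefl_neg, hss]
        exact fun hc => ((hpos a (hposΦ ha1)).mp ha1) hc
    · intro a _; dsimp only; rw [sRefl_neg, hss, neg_neg]
    · intro a _; dsimp only; rw [sRefl_neg, hss, neg_neg]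
  -- (iii) the part of `A` with `sγ` negative injects into `T.erase δ`
  have hδT : δ ∈ T := by
    simp only [hTdef, Finset.mem_filter]
    exact ⟨hδ, by rw [hsδ]; exact fun hc => ((hpos δ hδΦ).mp hδ) hc, hνδ⟩
  have hiii : (A.filter fun γ => ¬ sRefl δ γ ∈ Φpos).card ≤ (T.erase δ).card := by
    apply Finset.card_le_card_of_injOn (fun γ => -sRefl δ γ)
    · intro a ha
      simp only [hAdef, Finset.mem_filter, Finset.mem_coe] at ha ⊢
      obtain ⟨⟨ha1, ha2⟩, ha3⟩ := ha
      have hcoef : 0 ≤ ⟪a, δ⟫ :=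
        inner_nonneg_of_sRefl_not_pos Φ Φpos hΦ0 hΦrefl hΦred hΦint hposΦ hpos hposadd
          hδ ha1 ha3
      rw [Finset.mem_erase]
      constructor
      · intro hc
        have : a = δ := by
          have h1 : sRefl δ a = -δ := by simpa using congrArg Neg.neg hc
          have := congrArg (sRefl δ) h1
          rw [hss, sRefl_neg, hsδ, neg_neg] at this
          exact this
        rw [this] at ha2; linarith
      · simp only [hTdef, Finset.mem_filter]
        refine ⟨hnegmem a ha1 ha3, ?_, ?_⟩
        · rw [sRefl_neg, hss]
          exact fun hc => ((hpos a (hposΦ ha1)).mp ha1) hc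
        · rw [inner_neg_right, sRefl, inner_sub_right, real_inner_smul_right]
          have : 0 ≤ 2 * ⟪a, δ⟫ / ⟪δ, δ⟫ * ⟪ν, δ⟫ := by positivity
          linarith
    · intro a ha b hb hab
      have : sRefl δ a = sRefl δ b := by
        have := congrArg Neg.neg hab
        simpa using this
      have := congrArg (sRefl δ) this
      rwa [hss, hss] at this
  rw [Finset.card_erase_of_mem hδT] at hiii
  have hTpos : 0 < T.card := Finset.card_pos.mpr ⟨δ, hδT⟩
  omega

end Helpers

/-- Let `λ+ρ` be regular and let `α, β` be orthogonal positive roots satisfying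
`⟨λ+ρ, α∨⟩ = ⟨λ+ρ, β∨⟩`.  Then `|l(λ) - l((s_α s_β) * λ)| ≥ 2`, where `l(μ)` is the
number of positive roots `γ` with `(μ+ρ, γ) < 0` (recall `w*λ + ρ = w(λ+ρ)`). -/
theorem abs_sub_card_inversions_sRefl_sRefl_ge_two
    {E : Type*} [NormedAddCommGroup E] [InnerProductSpace ℝ E] [FiniteDimensional ℝ E]
    (Φ Φpos : Finset E)
    -- `Φ` is a finite reduced root system:
    (hΦ0 : (0 : E) ∉ Φ)
    (hΦneg : ∀ α ∈ Φ, -α ∈ Φ)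
    (hΦrefl : ∀ α ∈ Φ, ∀ β ∈ Φ, sRefl α β ∈ Φ)
    (hΦred : ∀ α ∈ Φ, ∀ t : ℝ, t • α ∈ Φ → t = 1 ∨ t = -1)
    (hΦint : ∀ α ∈ Φ, ∀ β ∈ Φ, ∃ n : ℤ, 2 * ⟪β, α⟫ / ⟪α, α⟫ = (n : ℝ))
    -- `Φpos` is a system of positive roots:
    (hposΦ : Φpos ⊆ Φ)
    (hpos : ∀ α ∈ Φ, (α ∈ Φpos ↔ -α ∉ Φpos))
    (hposadd : ∀ α ∈ Φpos, ∀ β ∈ Φpos, α + β ∈ Φ → α + β ∈ Φpos)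
    -- `ρ` is the half-sum of the positive roots:
    (ρ : E) (hρ : ρ = (2 : ℝ)⁻¹ • ∑ α ∈ Φpos, α)
    -- `λ+ρ` is regular:
    (lam : E) (hreg : ∀ α ∈ Φ, ⟪lam + ρ, α⟫ ≠ 0)
    -- `α, β` are orthogonal positive roots with `⟨λ+ρ, α∨⟩ = ⟨λ+ρ, β∨⟩`:
    (α β : E) (hα : α ∈ Φpos) (hβ : β ∈ Φpos) (horth : ⟪α, β⟫ = 0)
    (hpair : 2 * ⟪lam + ρ, α⟫ / ⟪α, α⟫ = 2 * ⟪lam + ρ, β⟫ / ⟪β, β⟫) :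
    2 ≤ |((Φpos.filter fun γ => ⟪lam + ρ, γ⟫ < 0).card : ℤ) -
          ((Φpos.filter fun γ => ⟪sRefl α (sRefl β (lam + ρ)), γ⟫ < 0).card : ℤ)| := by
    classical
  set μ := lam + ρ with hμdef
  have hαΦ := hposΦ hα
  have hβΦ := hposΦ hβ
  have hα0 : α ≠ 0 := fun h => hΦ0 (h ▸ hαΦ)
  have hβ0 : β ≠ 0 := fun h => hΦ0 (h ▸ hβΦ)
  have hαα : 0 < ⟪α, α⟫ :=
    lt_of_le_of_ne real_inner_self_nonneg (Ne.symm ((inner_self_ne_zero (𝕜 := ℝ)).mpr hα0))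
  have hββ : 0 < ⟪β, β⟫ :=
    lt_of_le_of_ne real_inner_self_nonneg (Ne.symm ((inner_self_ne_zero (𝕜 := ℝ)).mpr hβ0))
  have hαα' : ⟪α, α⟫ ≠ 0 := ne_of_gt hαα
  have hββ' : ⟪β, β⟫ ≠ 0 := ne_of_gt hββ
  have hβα : ⟪β, α⟫ = 0 := by rw [real_inner_comm]; exact horth
  have hsβα : sRefl β α = α := sRefl_of_inner_eq_zero horth
  have hsαβ : sRefl α β = β := sRefl_of_inner_eq_zero hβα
  have hμα0 : ⟪μ, α⟫ ≠ 0 := hreg α hαΦ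
  rw [div_eq_div_iff hαα' hββ'] at hpair
  rcases hμα0.lt_or_gt with hμα | hμα
  · -- `⟨μ, α∨⟩ < 0` : reflections decrease inversions by at least 2
    have hμβ : ⟪μ, β⟫ < 0 := by nlinarith
    have hsββ : sRefl β β = -β := sRefl_self hββ'
    have hsαα : sRefl α α = -α := sRefl_self hαα'
    set ν₀ := sRefl α (sRefl β μ) with hν₀
    have hν₀β : 0 < ⟪ν₀, β⟫ := by
      rw [hν₀, inner_sRefl_symm α _ β, hsαβ, inner_sRefl_symm β μ β, hsββ, inner_neg_right]
      linarith
    have h1 := step_card Φ Φpos hΦ0 hΦrefl hΦred hΦint hposΦ hpos hposadd ν₀ β hβ hν₀β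
    have hν₁α : 0 < ⟪sRefl β ν₀, α⟫ := by
      rw [inner_sRefl_symm β ν₀ α, hsβα, hν₀, inner_sRefl_symm α _ α, hsαα,
        inner_neg_right, inner_sRefl_symm β μ α, hsβα]
      linarith
    have h2 := step_card Φ Φpos hΦ0 hΦrefl hΦred hΦint hposΦ hpos hposadd
      (sRefl β ν₀) α hα hν₁α
    have e1 : sRefl β ν₀ = sRefl α μ := by
      rw [hν₀, ← sRefl_comm horth (sRefl β μ), sRefl_sRefl hββ']
    have hback : sRefl α (sRefl β ν₀) = μ := by
      rw [e1, sRefl_sRefl hαα']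
    rw [hback] at h2
    have hnn : (0 : ℤ) ≤ ((Φpos.filter fun γ => ⟪μ, γ⟫ < 0).card : ℤ)
        - ((Φpos.filter fun γ => ⟪ν₀, γ⟫ < 0).card : ℤ) := by omega
    rw [abs_of_nonneg hnn]
    omega
  · -- `⟨μ, α∨⟩ > 0` : reflections increase inversions by at least 2
    have hμβ : 0 < ⟪μ, β⟫ := by nlinarith
    have h1 := step_card Φ Φpos hΦ0 hΦrefl hΦred hΦint hposΦ hpos hposadd μ β hβ hμβ
    have hνα : 0 < ⟪sRefl β μ, α⟫ := by
      rw [inner_sRefl_symm β μ α, hsβα]; exact hμα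
    have h2 := step_card Φ Φpos hΦ0 hΦrefl hΦred hΦint hposΦ hpos hposadd
      (sRefl β μ) α hα hνα
    have hnn : (0 : ℤ) ≤ ((Φpos.filter fun γ => ⟪sRefl α (sRefl β μ), γ⟫ < 0).card : ℤ)
        - ((Φpos.filter fun γ => ⟪μ, γ⟫ < 0).card : ℤ) := by omega
    rw [abs_sub_comm, abs_of_nonneg hnn]
    omega
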